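/- arXiv:1402.5136 — 2 statements merged into one kernel-verified Lean document; each statement's English description precedes it below -/
import Mathlib

section
/- Let σμ be the identity x t1 x y t2 y ≈ x t1 y x t2 y, σ1 the identity x y t1 x t2 y ≈ y x t1 x t2 y, and σ2 the identity x t1 y t2 x y ≈ x t1 y t2 y x. Then: (i) an identity u ≈ v is a consequence of {σμ}^δ if and only if it is block-balanced and for all variables x, y ∈ con(u), the first occurrence of x precedes the first occurrence of y in u iff it does in v, and the last occurrence of x precedes the last occurrence of y in u iff it does in v; (ii) an identity u ≈ v is a consequence of {σ1, σμ}^δ if and only if it is block-balanced and for all x, y ∈ con(u), the last occurrence of x precedes the last occurrence of y in u iff it does in v; (iii) an identity u ≈ v is a consequence of {σ2, σμ}^δ if and only if it is block-balanced and for all x, y ∈ con(u), the first occurrence of x precedes the first occurrence of y in u iff it does in v. -/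
/-- Words over a countably infinite alphabet of variables (identified with ℕ). -/
abbrev Wd := List ℕ

/-- Evaluation of a word in a monoid under an assignment of the variables. -/
def evalWord {M : Type*} [Monoid M] (φ : ℕ → M) (u : Wd) : M := (u.map φ).prod

/-- A monoid `M` satisfies the identity `e = (u, v)`. -/
def Sat (M : Type*) [Monoid M] (e : Wd × Wd) : Prop :=
  ∀ φ : ℕ → M, evalWord φ e.1 = evalWord φ e.2

/-- The identity `e` is a consequence of the set of identities `Γ`:
every monoid satisfying all identities of `Γ` satisfies `e`. -/
def Consequence (Γ : Set (Wd × Wd)) (e : Wd × Wd) : Prop :=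
  ∀ (M : Type) [Monoid M], (∀ f ∈ Γ, Sat M f) → Sat M e

/-- The content of a word: the set of variables occurring in it. -/
def conW (u : Wd) : Set ℕ := {x | x ∈ u}

/-- The set of linear (exactly once occurring) variables of a word. -/
def linW (u : Wd) : Set ℕ := {x | u.count x = 1}

/-- The set of non-linear (more than once occurring) variables of a word. -/
def nonW (u : Wd) : Set ℕ := {x | 2 ≤ u.count x}

/-- `restrict u X` is the word obtained from `u` by deleting all occurrences of
all variables not in `X`. -/
noncomputable def restrict (u : Wd) (X : Set ℕ) : Wd :=
  u.filter (fun a => @decide (a ∈ X) (Classical.propDecidable _))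

/-- The closure of a set of identities under deleting variables. -/
def delta (Γ : Set (Wd × Wd)) : Set (Wd × Wd) :=
  {e | ∃ f ∈ Γ, ∃ X : Set ℕ, e = (restrict f.1 X, restrict f.2 X)}

/-- A word is almost-linear if it has at most one non-linear variable. -/
def AlmostLinearW (u : Wd) : Prop := ∀ x y, 2 ≤ u.count x → 2 ≤ u.count y → x = y

/-- An identity is almost-linear if both of its sides are almost-linear words. -/
def AlmostLinearId (e : Wd × Wd) : Prop := AlmostLinearW e.1 ∧ AlmostLinearW e.2

/-- An identity is regular if both sides have the same content. -/
def RegularId (e : Wd × Wd) : Prop := conW e.1 = conW e.2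

/-- A word `u` is an isoterm for a monoid `M` if the only word `v` with
`M ⊨ u ≈ v` is `u` itself. -/
def Isoterm (M : Type*) [Monoid M] (u : Wd) : Prop := ∀ v : Wd, Sat M (u, v) → v = u

/-- An identity `u ≈ v` is block-balanced if `u(x, lin u) = v(x, lin u)`
for every variable `x`. -/
def BlockBalanced (e : Wd × Wd) : Prop :=
  ∀ x : ℕ, restrict e.1 ({x} ∪ linW e.1) = restrict e.2 ({x} ∪ linW e.1)

/-- A monoid is finitely based: some finite set of its identities implies all of them. -/
def FinitelyBased (S : Type*) [Monoid S] : Prop :=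
  ∃ Γ : Set (Wd × Wd), Γ.Finite ∧ (∀ e ∈ Γ, Sat S e) ∧
    ∀ e : Wd × Wd, Sat S e → Consequence Γ e

/-- Index of the first occurrence of a variable in a word. -/
def firstIdx (u : Wd) (x : ℕ) : ℕ := u.idxOf x

/-- Index of the last occurrence of a variable in a word. -/
def lastIdx (u : Wd) (x : ℕ) : ℕ := u.length - 1 - u.reverse.idxOf x

/-- σ1 : x y t1 x t2 y ≈ y x t1 x t2 y, with x=0, y=1, t1=2, t2=3. -/
def sigma1 : Wd × Wd := ([0,1,2,0,3,1], [1,0,2,0,3,1])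

/-- σμ : x t1 x y t2 y ≈ x t1 y x t2 y, with x=0, y=1, t1=2, t2=3. -/
def sigmaMu : Wd × Wd := ([0,2,0,1,3,1], [0,2,1,0,3,1])

/-- σ2 : x t1 y t2 x y ≈ x t1 y t2 y x, with x=0, y=1, t1=2, t2=3. -/
def sigma2 : Wd × Wd := ([0,2,1,3,0,1], [0,2,1,3,1,0])

/-- The order of first occurrences of variables is the same on both sides. -/
def FirstOrderSame (e : Wd × Wd) : Prop :=
  ∀ x ∈ conW e.1, ∀ y ∈ conW e.1,
    (firstIdx e.1 x < firstIdx e.1 y ↔ firstIdx e.2 x < firstIdx e.2 y)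

/-- The order of last occurrences of variables is the same on both sides. -/
def LastOrderSame (e : Wd × Wd) : Prop :=
  ∀ x ∈ conW e.1, ∀ y ∈ conW e.1,
    (lastIdx e.1 x < lastIdx e.1 y ↔ lastIdx e.2 x < lastIdx e.2 y)

/-!
Deleting variables is a substitution, so `Γ^δ` and `Γ` have the same consequences, namely the
pairs in the congruence on words generated by the substitution instances of `Γ`.

Soundness. Derivations survive deleting variables. An instance of `σμ` or `σ₁` one of whose
sides is almost-linear only swaps two powers of the same letter, so it changes no almost-linear
word; applied to `u(x, lin u)` this gives block-balance. Both sides of an instance of `σμ` or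
`σ₂` start with the same letter; applied to restrictions to two variables this gives the order
of first occurrences. Reversal combined with the renaming `x ↔ y`, `t₁ ↔ t₂` fixes `σμ` and
exchanges `σ₁` and `σ₂`; it turns first occurrences into last ones and reduces (iii) to (ii).

Completeness. Let `u = c x u'` and `v = c w` satisfy the invariants. The first `x` of `w` is
moved to the front of `w` by adjacent swaps `z x → x z`. Each swap is an instance of `σμ`, when
one of the two letters occurs to the left and the other to the right, or of `σ₁`, when both
recur to the right. Block-balance and the orders of occurrences guarantee that one of the two
cases applies. Then induct on `u'`.
-/

open scoped Classical

theorem evalWord_append {M : Type*} [Monoid M] (φ : ℕ → M) (u v : Wd) :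
    evalWord φ (u ++ v) = evalWord φ u * evalWord φ v := by
  simp [evalWord]

theorem evalWord_flatMap {M : Type*} [Monoid M] (φ : ℕ → M) (σ : ℕ → Wd) (u : Wd) :
    evalWord φ (u.flatMap σ) = evalWord (fun n => evalWord φ (σ n)) u := by
  induction u with
  | nil => rfl
  | cons a u ih =>
    rw [List.flatMap_cons, evalWord_append, ih]
    rfl

theorem restrict_eq_flatMap (u : Wd) (X : Set ℕ) :
    restrict u X = u.flatMap fun n => if n ∈ X then [n] else [] := by
  induction u with
  | nil => rfl
  | cons a u ih =>
    rw [List.flatMap_cons, ← ih]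
    by_cases ha : a ∈ X <;> simp [restrict, ha]

theorem mem_restrict {a : ℕ} {u : Wd} {X : Set ℕ} : a ∈ restrict u X ↔ a ∈ u ∧ a ∈ X := by
  simp [restrict]

theorem restrict_append (u v : Wd) (X : Set ℕ) :
    restrict (u ++ v) X = restrict u X ++ restrict v X := by
  simp [restrict]

theorem restrict_cons_of_mem {x : ℕ} {X : Set ℕ} (hx : x ∈ X) (u : Wd) :
    restrict (x :: u) X = x :: restrict u X := by
  simp [restrict, hx]

theorem restrict_cons_of_notMem {x : ℕ} {X : Set ℕ} (hx : x ∉ X) (u : Wd) :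
    restrict (x :: u) X = restrict u X := by
  simp [restrict, hx]

theorem count_restrict_of_mem {x : ℕ} {X : Set ℕ} (hx : x ∈ X) (u : Wd) :
    (restrict u X).count x = u.count x :=
  List.count_filter (by simpa using hx)

theorem restrict_reverse (u : Wd) (X : Set ℕ) :
    restrict u.reverse X = (restrict u X).reverse :=
  List.filter_reverse

theorem linW_reverse (u : Wd) : linW u.reverse = linW u := by
  ext y
  simp [linW]

/-! ### Equational logic -/

inductive Provable (Γ : Set (Wd × Wd)) : Wd → Wd → Prop
  | inst {e : Wd × Wd} (he : e ∈ Γ) (σ : ℕ → Wd) : Provable Γ (e.1.flatMap σ) (e.2.flatMap σ)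
  | refl (u : Wd) : Provable Γ u u
  | symm {u v : Wd} : Provable Γ u v → Provable Γ v u
  | trans {u v w : Wd} : Provable Γ u v → Provable Γ v w → Provable Γ u w
  | append {u v u' v' : Wd} : Provable Γ u v → Provable Γ u' v' → Provable Γ (u ++ u') (v ++ v')

namespace Provable

variable {Γ : Set (Wd × Wd)} {u v : Wd}

theorem le_of_congruence {r : Wd → Wd → Prop} (hr : Equivalence r)
    (happend : ∀ {u v u' v'}, r u v → r u' v' → r (u ++ u') (v ++ v'))
    (hinst : ∀ e ∈ Γ, ∀ σ : ℕ → Wd, r (e.1.flatMap σ) (e.2.flatMap σ)) (h : Provable Γ u v) :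
    r u v := by
  induction h with
  | inst he σ => exact hinst _ he σ
  | refl u => exact hr.refl u
  | symm _ ih => exact hr.symm ih
  | trans _ _ ih ih' => exact hr.trans ih ih'
  | append _ _ ih ih' => exact happend ih ih'

theorem flatMap (τ : ℕ → Wd) (h : Provable Γ u v) : Provable Γ (u.flatMap τ) (v.flatMap τ) :=
  h.le_of_congruence (r := fun u v => Provable Γ (u.flatMap τ) (v.flatMap τ))
    ⟨fun _ => refl _, symm, trans⟩
    (fun h h' => by simpa only [List.flatMap_append] using h.append h')
    (fun _ he σ => by simpa only [List.flatMap_assoc] using inst he fun n => (σ n).flatMap τ)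

theorem reverse {Γ' : Set (Wd × Wd)}
    (hΓ : ∀ e ∈ Γ, ∃ f ∈ Γ', ∃ τ : ℕ → Wd, e.1.reverse = f.1.flatMap τ ∧ e.2.reverse = f.2.flatMap τ)
    (h : Provable Γ u v) : Provable Γ' u.reverse v.reverse :=
  h.le_of_congruence (r := fun u v => Provable Γ' u.reverse v.reverse)
    ⟨fun _ => refl _, symm, trans⟩
    (fun h h' => by simpa only [List.reverse_append] using h'.append h)
    (fun e he σ => by
      obtain ⟨f, hf, τ, h₁, h₂⟩ := hΓ e he
      simp only [List.reverse_flatMap, h₁, h₂, List.flatMap_assoc]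
      exact inst hf _)

end Provable

theorem Provable.consequence {Γ : Set (Wd × Wd)} {u v : Wd} (h : Provable Γ u v) :
    Consequence Γ (u, v) :=
  h.le_of_congruence (r := fun u v => Consequence Γ (u, v))
    ⟨fun _ _ _ _ _ => rfl, fun h M _ hM φ => (h M hM φ).symm,
      fun h h' M _ hM φ => (h M hM φ).trans (h' M hM φ)⟩
    (fun h h' M _ hM φ => by
      simp only [evalWord_append]
      rw [h M hM φ, h' M hM φ])
    (fun e he σ M _ hM φ => by
      simp only [evalWord_flatMap]
      exact hM e he _)

theorem Provable.restrict {Γ : Set (Wd × Wd)} {u v : Wd} (h : Provable Γ u v) (X : Set ℕ) :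
    Provable Γ (restrict u X) (restrict v X) := by
  simpa only [restrict_eq_flatMap] using h.flatMap _

def provableCon (Γ : Set (Wd × Wd)) : Con (FreeMonoid ℕ) where
  r u v := Provable Γ u.toList v.toList
  iseqv := ⟨fun _ => .refl _, .symm, .trans⟩
  mul' h h' := by simpa only [FreeMonoid.toList_mul] using h.append h'

theorem evalWord_provableCon (Γ : Set (Wd × Wd)) (σ : ℕ → Wd) (u : Wd) :
    evalWord (fun n => (FreeMonoid.ofList (σ n) : (provableCon Γ).Quotient)) u =
      FreeMonoid.ofList (u.flatMap σ) := by
  induction u with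
  | nil => rfl
  | cons a u ih =>
    simp only [evalWord, List.map_cons, List.prod_cons] at ih ⊢
    rw [ih, List.flatMap_cons, FreeMonoid.ofList_append, Con.coe_mul]

theorem consequence_iff_provable {Γ : Set (Wd × Wd)} {u v : Wd} :
    Consequence Γ (u, v) ↔ Provable Γ u v := by
  refine ⟨fun h => ?_, Provable.consequence⟩
  have hsat : ∀ f ∈ Γ, Sat (provableCon Γ).Quotient f := by
    intro f hf φ
    have hrep : ∀ n, ∃ w : Wd, φ n = FreeMonoid.ofList w :=
      fun n => Con.induction_on (φ n) fun w => ⟨w.toList, rfl⟩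
    choose σ hσ using hrep
    simp only [show φ = _ from funext hσ, evalWord_provableCon]
    exact (Con.eq _).mpr (Provable.inst hf σ)
  have := h _ hsat fun n => FreeMonoid.ofList [n]
  simp only [evalWord_provableCon, List.flatMap_singleton'] at this
  exact (Con.eq _).mp this

theorem consequence_delta_iff (Γ : Set (Wd × Wd)) (e : Wd × Wd) :
    Consequence (delta Γ) e ↔ Consequence Γ e := by
  refine ⟨fun h M _ hM => h M ?_, fun h M _ hM => h M fun f hf => hM f ⟨f, hf, Set.univ, ?_⟩⟩
  · rintro _ ⟨f, hf, X, rfl⟩ φ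
    have heval : ∀ w : Wd, evalWord φ (restrict w X) =
        evalWord (fun n => if n ∈ X then φ n else 1) w := fun w => by
      rw [restrict_eq_flatMap, evalWord_flatMap]
      congr 1
      funext n
      split_ifs <;> simp [evalWord]
    rw [heval, heval]
    exact hM f hf _
  · simp [restrict]

/-! ### Invariants of derivations -/

theorem AlmostLinearW.of_sublist {u v : Wd} (h : AlmostLinearW v) (huv : u.Sublist v) :
    AlmostLinearW u :=
  fun x y hx hy => h x y (hx.trans (huv.count_le x)) (hy.trans (huv.count_le y))

theorem almostLinearW_restrict_singleton_union_linW (u : Wd) (x : ℕ) :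
    AlmostLinearW (restrict u ({x} ∪ linW u)) := by
  have hx : ∀ y, 2 ≤ (restrict u ({x} ∪ linW u)).count y → y = x := by
    intro y hy
    have hyX : y ∈ ({x} : Set ℕ) ∪ linW u :=
      (mem_restrict.mp (List.count_pos_iff.mp (by omega : 0 < (restrict u _).count y))).2
    have hyu : 2 ≤ u.count y := hy.trans ((List.filter_sublist).count_le y)
    rcases hyX with hyx | hylin
    · exact hyx
    · have : u.count y = 1 := hylin
      omega
  exact fun y z hy hz => (hx y hy).trans (hx z hz).symm

def AlmostLinearAgree (u v : Wd) : Prop := AlmostLinearW u ∨ AlmostLinearW v → u = v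

theorem Provable.almostLinearAgree {Γ : Set (Wd × Wd)} {u v : Wd}
    (hΓ : ∀ e ∈ Γ, ∀ σ : ℕ → Wd, AlmostLinearAgree (e.1.flatMap σ) (e.2.flatMap σ))
    (h : Provable Γ u v) : AlmostLinearAgree u v := by
  refine h.le_of_congruence ⟨fun _ _ => rfl, fun h hal => (h hal.symm).symm, ?_⟩ ?_ hΓ
  · intro u v w h₁ h₂ hal
    rcases hal with hal | hal
    · have e₁ := h₁ (.inl hal)
      exact e₁.trans (h₂ (.inl (e₁ ▸ hal)))
    · have e₂ := h₂ (.inr hal)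
      exact (h₁ (.inr (e₂ ▸ hal))).trans e₂
  · intro u v u' v' h h' hal
    have hsub : ∀ {a b : Wd}, AlmostLinearW (a ++ b) → AlmostLinearW a ∧ AlmostLinearW b :=
      fun hab => ⟨hab.of_sublist (List.sublist_append_left _ _),
        hab.of_sublist (List.sublist_append_right _ _)⟩
    rcases hal with hal | hal
    · rw [h (.inl (hsub hal).1), h' (.inl (hsub hal).2)]
    · rw [h (.inr (hsub hal).1), h' (.inr (hsub hal).2)]

theorem Provable.blockBalanced {Γ : Set (Wd × Wd)} {u v : Wd}
    (hΓ : ∀ e ∈ Γ, ∀ σ : ℕ → Wd, AlmostLinearAgree (e.1.flatMap σ) (e.2.flatMap σ))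
    (h : Provable Γ u v) : BlockBalanced (u, v) := fun x =>
  (h.restrict _).almostLinearAgree hΓ (.inl (almostLinearW_restrict_singleton_union_linW u x))

theorem Provable.head?_eq {Γ : Set (Wd × Wd)} {u v : Wd}
    (hΓ : ∀ e ∈ Γ, ∀ σ : ℕ → Wd, (e.1.flatMap σ).head? = (e.2.flatMap σ).head?)
    (h : Provable Γ u v) : u.head? = v.head? :=
  h.le_of_congruence (r := fun u v => u.head? = v.head?) ⟨fun _ => rfl, Eq.symm, Eq.trans⟩
    (fun h h' => by rw [List.head?_append, List.head?_append, h, h']) hΓ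

theorem idxOf_lt_idxOf_iff_head?_restrict {u : Wd} {x y : ℕ} (hx : x ∈ u) (hxy : x ≠ y) :
    u.idxOf x < u.idxOf y ↔ (restrict u {x, y}).head? = some x := by
  induction u with
  | nil => simp at hx
  | cons a t ih =>
    by_cases hax : a = x
    · subst hax
      simp [restrict_cons_of_mem, List.idxOf_cons_ne _ hxy]
    by_cases hay : a = y
    · subst hay
      simp [restrict_cons_of_mem, Ne.symm hxy]
    have hxt : x ∈ t := List.mem_of_ne_of_mem (Ne.symm hax) hx
    rw [List.idxOf_cons_ne _ hax, List.idxOf_cons_ne _ hay, Nat.succ_lt_succ_iff,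
      restrict_cons_of_notMem (by simp [hax, hay]), ih hxt]

theorem head?_restrict_singleton {u : Wd} {x : ℕ} : (restrict u {x}).head? = some x ↔ x ∈ u := by
  induction u with
  | nil => simp [restrict]
  | cons a t ih =>
    by_cases hax : a = x
    · subst hax; simp [restrict_cons_of_mem]
    · simp [restrict_cons_of_notMem (Set.mem_singleton_iff.not.mpr hax), ih, Ne.symm hax]

theorem firstOrderSame_of_head?_restrict {u v : Wd}
    (h : ∀ X, (restrict u X).head? = (restrict v X).head?) : FirstOrderSame (u, v) := by
  intro x hx y _
  have hxv : x ∈ v := head?_restrict_singleton.mp (h {x} ▸ head?_restrict_singleton.mpr hx)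
  by_cases hxy : x = y
  · subst hxy; simp
  · simp only [firstIdx]
    rw [idxOf_lt_idxOf_iff_head?_restrict hx hxy, idxOf_lt_idxOf_iff_head?_restrict hxv hxy, h]

theorem Provable.firstOrderSame {Γ : Set (Wd × Wd)} {u v : Wd}
    (hΓ : ∀ e ∈ Γ, ∀ σ : ℕ → Wd, (e.1.flatMap σ).head? = (e.2.flatMap σ).head?)
    (h : Provable Γ u v) : FirstOrderSame (u, v) :=
  firstOrderSame_of_head?_restrict fun X => (h.restrict X).head?_eq hΓ

theorem lastIdx_lt_lastIdx_iff {u : Wd} {x y : ℕ} (hx : x ∈ u) (hy : y ∈ u) :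
    lastIdx u x < lastIdx u y ↔ firstIdx u.reverse y < firstIdx u.reverse x := by
  have hx' := List.idxOf_lt_length_of_mem (List.mem_reverse.mpr hx)
  have hy' := List.idxOf_lt_length_of_mem (List.mem_reverse.mpr hy)
  rw [List.length_reverse] at hx' hy'
  simp only [lastIdx, firstIdx]
  omega

theorem lastOrderSame_iff_firstOrderSame_reverse {u v : Wd} (hmem : ∀ x, x ∈ u ↔ x ∈ v) :
    LastOrderSame (u, v) ↔ FirstOrderSame (u.reverse, v.reverse) := by
  simp only [LastOrderSame, FirstOrderSame, conW, Set.mem_ofPred_eq, List.mem_reverse]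
  refine ⟨fun h x hx y hy => ?_, fun h x hx y hy => ?_⟩
  · rw [← lastIdx_lt_lastIdx_iff hy hx, ← lastIdx_lt_lastIdx_iff ((hmem y).mp hy) ((hmem x).mp hx)]
    exact h y hy x hx
  · rw [lastIdx_lt_lastIdx_iff hx hy, lastIdx_lt_lastIdx_iff ((hmem x).mp hx) ((hmem y).mp hy)]
    exact h y hy x hx

theorem firstIdx_lt_firstIdx_iff_mem {p s : Wd} {x z : ℕ} (hx : x ∉ p) :
    firstIdx (p ++ x :: s) z < firstIdx (p ++ x :: s) x ↔ z ∈ p := by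
  simp only [firstIdx, List.idxOf_append, hx, if_false, List.idxOf_cons_self, zero_add]
  by_cases hz : z ∈ p
  · simp [hz, List.idxOf_lt_length_of_mem hz]
  · simp [hz]

theorem lastIdx_lt_lastIdx_iff_mem {p s : Wd} {x z : ℕ} (hx : x ∉ s) (hz : z ∈ p ++ x :: s) :
    lastIdx (p ++ x :: s) x < lastIdx (p ++ x :: s) z ↔ z ∈ s := by
  rw [lastIdx_lt_lastIdx_iff (by simp) hz, List.reverse_append, List.reverse_cons,
    List.append_assoc, List.singleton_append,
    firstIdx_lt_firstIdx_iff_mem (List.mem_reverse.not.mpr hx), List.mem_reverse]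

namespace BlockBalanced

variable {u v w : Wd}

theorem count_eq (h : BlockBalanced (u, v)) (y : ℕ) : u.count y = v.count y := by
  have := congrArg (List.count y) (h y)
  rwa [count_restrict_of_mem (Or.inl rfl), count_restrict_of_mem (Or.inl rfl)] at this

theorem mem_iff (h : BlockBalanced (u, v)) (y : ℕ) : y ∈ u ↔ y ∈ v := by
  rw [← List.count_pos_iff, ← List.count_pos_iff, h.count_eq]

theorem trans (h₁ : BlockBalanced (u, v)) (h₂ : BlockBalanced (v, w)) :
    BlockBalanced (u, w) := by
  have hlin : linW v = linW u := by
    ext y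
    simp only [linW, Set.mem_ofPred_eq, h₁.count_eq]
  exact fun x => (h₁ x).trans (hlin ▸ h₂ x)

theorem reverse_iff : BlockBalanced (u.reverse, v.reverse) ↔ BlockBalanced (u, v) := by
  refine forall_congr' fun x => ?_
  simp only [linW_reverse, restrict_reverse, List.reverse_inj]

end BlockBalanced

theorem notMem_of_restrict_eq {c a m b : Wd} {x z : ℕ} {X : Set ℕ} (hx : x ∈ X) (hxm : x ∉ m)
    (h : restrict (c ++ x :: a) X = restrict (c ++ (m ++ x :: b)) X) (hz : z ∈ m) : z ∉ X := by
  intro hzX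
  rw [restrict_append, restrict_append, restrict_append, restrict_cons_of_mem hx,
    restrict_cons_of_mem hx, List.append_cancel_left_eq] at h
  obtain ⟨z', t, hm⟩ := List.exists_cons_of_ne_nil (List.ne_nil_of_mem (mem_restrict.mpr ⟨hz, hzX⟩))
  rw [hm, List.cons_append, List.cons.injEq] at h
  exact hxm (mem_restrict.mp (h.1 ▸ hm ▸ List.mem_cons_self)).1

theorem BlockBalanced.two_le_count_of_mem_gap {c a m b : Wd} {x z : ℕ}
    (h : BlockBalanced (c ++ x :: a, c ++ (m ++ x :: b))) (hxm : x ∉ m) (hz : z ∈ m) :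
    2 ≤ (c ++ (m ++ x :: b)).count z := by
  have hzlin : (c ++ x :: a).count z ≠ 1 := fun hlin =>
    notMem_of_restrict_eq (Or.inl rfl) hxm (h x) hz (Or.inr hlin)
  have hpos : 0 < (c ++ (m ++ x :: b)).count z := List.count_pos_iff.mpr (by simp [hz])
  rw [h.count_eq] at hzlin
  omega

theorem BlockBalanced.mem_or_mem_of_mem_gap {c a m b : Wd} {x z : ℕ}
    (h : BlockBalanced (c ++ x :: a, c ++ (m ++ x :: b))) (hxm : x ∉ m) (hz : z ∈ m) :
    x ∈ c ∨ x ∈ b := by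
  by_contra! hx
  have hxlin : x ∈ linW (c ++ x :: a) := by
    show (c ++ x :: a).count x = 1
    simp [h.count_eq, List.count_eq_zero.mpr hx.1, List.count_eq_zero.mpr hx.2,
      List.count_eq_zero.mpr hxm]
  exact notMem_of_restrict_eq (Or.inr hxlin) hxm (h z) hz (Or.inl rfl)

/-! ### Moving a letter to the front -/

section Moves

variable {Γ : Set (Wd × Wd)} {p s : Wd} {a b : ℕ}

theorem Provable.swap_of_mem_of_mem (hμ : sigmaMu ∈ Γ) (ha : a ∈ p) (hb : b ∈ s) :
    Provable Γ (p ++ a :: b :: s) (p ++ b :: a :: s) := by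
  obtain ⟨p₁, p₂, rfl⟩ := List.append_of_mem ha
  obtain ⟨s₁, s₂, rfl⟩ := List.append_of_mem hb
  simpa [sigmaMu] using ((refl p₁).append (inst hμ ([[a], [b], p₂, s₁].getD · []))).append (refl s₂)

theorem Provable.swap_of_sigma1 (h₁ : sigma1 ∈ Γ) (ha : a ∈ s) (hb : b ∈ s) :
    Provable Γ (p ++ a :: b :: s) (p ++ b :: a :: s) := by
  have key : ∀ {a b : ℕ} {s₁ s₂ : Wd}, b ∈ s₂ →
      Provable Γ (p ++ a :: b :: (s₁ ++ a :: s₂)) (p ++ b :: a :: (s₁ ++ a :: s₂)) := by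
    intro a b s₁ s₂ hb
    obtain ⟨t₁, t₂, rfl⟩ := List.append_of_mem hb
    simpa [sigma1] using ((refl p).append (inst h₁ ([[a], [b], s₁, t₁].getD · []))).append (refl t₂)
  obtain ⟨s₁, s₂, rfl⟩ := List.append_of_mem ha
  by_cases hb₂ : b ∈ s₂
  · exact key hb₂
  by_cases hab : a = b
  · subst hab
    exact refl _
  obtain ⟨t₁, t₂, rfl⟩ := List.append_of_mem (show b ∈ s₁ by simpa [hb₂, Ne.symm hab] using hb)
  simpa using (key (a := b) (b := a) (s₁ := t₁) (s₂ := t₂ ++ a :: s₂) (by simp)).symm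

/-- `σμ` licenses the first two disjuncts, `σ₁` the last one. -/
def Swappable (Γ : Set (Wd × Wd)) (p : Wd) (a b : ℕ) (s : Wd) : Prop :=
  a ∈ p ∧ b ∈ s ∨ b ∈ p ∧ a ∈ s ∨ sigma1 ∈ Γ ∧ a ∈ s ∧ b ∈ s

theorem Provable.swap (hμ : sigmaMu ∈ Γ) (h : Swappable Γ p a b s) :
    Provable Γ (p ++ a :: b :: s) (p ++ b :: a :: s) := by
  rcases h with ⟨ha, hb⟩ | ⟨hb, ha⟩ | ⟨h₁, ha, hb⟩
  · exact swap_of_mem_of_mem hμ ha hb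
  · exact (swap_of_mem_of_mem hμ hb ha).symm
  · exact swap_of_sigma1 h₁ ha hb

theorem Provable.move_left (hμ : sigmaMu ∈ Γ) {x : ℕ} {r : Wd} :
    ∀ {c m : Wd}, (∀ m₁ z m₂, m = m₁ ++ z :: m₂ → Swappable Γ (c ++ m₁) z x (m₂ ++ r)) →
      Provable Γ (c ++ m ++ x :: r) (c ++ x :: (m ++ r))
  | c, [], _ => by simpa using refl (c ++ x :: r)
  | c, z :: m, h => by
    have hmove := move_left (c := c ++ [z]) (m := m) hμ fun m₁ z' m₂ hm =>
      by simpa using h (z :: m₁) z' m₂ (by simp [hm])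
    have hswap := swap hμ (h [] z m rfl)
    simp only [List.append_nil] at hswap
    simp only [List.append_assoc, List.singleton_append] at hmove
    simpa using hmove.trans hswap

end Moves

/-- `σ₁` does not preserve the order of first occurrences; it preserves the other two
invariants, as does `σμ`. -/
def Admissible (Γ : Set (Wd × Wd)) (u v : Wd) : Prop :=
  BlockBalanced (u, v) ∧ LastOrderSame (u, v) ∧ (sigma1 ∈ Γ ∨ FirstOrderSame (u, v))

namespace Admissible

variable {Γ : Set (Wd × Wd)}

theorem trans {u v w : Wd} (h₁ : Admissible Γ u v) (h₂ : Admissible Γ v w) :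
    Admissible Γ u w := by
  obtain ⟨hB₁, hL₁, hF₁⟩ := h₁
  obtain ⟨hB₂, hL₂, hF₂⟩ := h₂
  have hmem : ∀ x ∈ conW u, x ∈ conW v := fun x hx => (hB₁.mem_iff x).mp hx
  refine ⟨hB₁.trans hB₂, fun x hx y hy => (hL₁ x hx y hy).trans (hL₂ x (hmem x hx) y (hmem y hy)),
    ?_⟩
  rcases hF₁ with h₁ | hF₁
  · exact .inl h₁
  rcases hF₂ with h₁ | hF₂
  · exact .inl h₁
  exact .inr fun x hx y hy => (hF₁ x hx y hy).trans (hF₂ x (hmem x hx) y (hmem y hy))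

theorem swappable {c u₁ m r m₁ m₂ : Wd} {x z : ℕ}
    (h : Admissible Γ (c ++ x :: u₁) (c ++ (m ++ x :: r))) (hxm : x ∉ m)
    (hm : m = m₁ ++ z :: m₂) : Swappable Γ (c ++ m₁) z x (m₂ ++ r) := by
  obtain ⟨hBB, hL, hF⟩ := h
  have hzm : z ∈ m := by simp [hm]
  have hzx : z ≠ x := fun h => hxm (h ▸ hzm)
  have hz₂ := hBB.two_le_count_of_mem_gap hxm hzm
  have hzu : z ∈ c ++ x :: u₁ := (hBB.mem_iff z).mpr (List.count_pos_iff.mp (by omega))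
  have hv : c ++ (m ++ x :: r) = (c ++ m) ++ x :: r := by simp
  by_cases hlater : z ∈ m₂ ++ r
  · by_cases hxc : x ∈ c
    · exact .inr (.inl ⟨List.mem_append_left _ hxc, hlater⟩)
    have hxr : x ∈ r := (hBB.mem_or_mem_of_mem_gap hxm hzm).resolve_left hxc
    rcases hF with h₁ | hF
    · exact .inr (.inr ⟨h₁, hlater, List.mem_append_right _ hxr⟩)
    -- `z` occurs before the first `x` in `v`, hence also in `u`, i.e. inside `c`
    have hfirst : firstIdx (c ++ x :: u₁) z < firstIdx (c ++ x :: u₁) x ↔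
        firstIdx ((c ++ m) ++ x :: r) z < firstIdx ((c ++ m) ++ x :: r) x := by
      simpa only [hv] using hF z hzu x (by simp [conW])
    rw [firstIdx_lt_firstIdx_iff_mem hxc, firstIdx_lt_firstIdx_iff_mem (by simp [hxc, hxm])]
      at hfirst
    exact .inl ⟨List.mem_append_left _ (hfirst.mpr (List.mem_append_right _ hzm)),
      List.mem_append_right _ hxr⟩
  have hlater0 : (m₂ ++ r).count z = 0 := List.count_eq_zero.mpr hlater
  have hzc : z ∈ c ++ m₁ := by
    rw [hm] at hz₂
    simp only [List.count_append, List.count_cons, beq_iff_eq, hzx.symm, ↓reduceIte] at hz₂ hlater0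
    exact List.count_pos_iff.mp (by simp only [List.count_append]; omega)
  refine .inl ⟨hzc, List.mem_append_right _ ?_⟩
  -- otherwise the last `z` would precede the last `x` in `v` but not in `u`
  by_contra hxr
  have hcx := hBB.count_eq x
  have hcz := hBB.count_eq z
  have hzm' := List.count_pos_iff.mpr hzm
  simp only [List.count_append, List.count_cons, beq_iff_eq, hzx.symm, List.count_eq_zero.mpr hxm,
    List.count_eq_zero.mpr hxr] at hcx hcz
  have hxu₁ : x ∉ u₁ := List.count_eq_zero.mp (by omega)
  have hzu₁ : z ∈ u₁ := List.count_pos_iff.mp (by omega)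
  have hlast : lastIdx (c ++ x :: u₁) x < lastIdx (c ++ x :: u₁) z ↔
      lastIdx ((c ++ m) ++ x :: r) x < lastIdx ((c ++ m) ++ x :: r) z := by
    simpa only [hv] using hL x (by simp [conW]) z hzu
  rw [lastIdx_lt_lastIdx_iff_mem hxu₁ hzu,
    lastIdx_lt_lastIdx_iff_mem hxr (hv ▸ (hBB.mem_iff z).mp hzu)] at hlast
  exact hlater (List.mem_append_right _ (hlast.mp hzu₁))

theorem exists_provable_cons (hμ : sigmaMu ∈ Γ) {c u₁ w : Wd} {x : ℕ}
    (h : Admissible Γ (c ++ x :: u₁) (c ++ w)) : ∃ w', Provable Γ (c ++ w) (c ++ x :: w') := by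
  have hxw : x ∈ w := by
    have := h.1.count_eq x
    simp only [List.count_append, List.count_cons_self] at this
    exact List.count_pos_iff.mp (by omega)
  obtain ⟨m, r, hxm, rfl, -⟩ := List.exists_erase_eq hxw
  exact ⟨m ++ r, by simpa using Provable.move_left hμ fun m₁ z m₂ hm => h.swappable hxm hm⟩

end Admissible

theorem provable_of_admissible {Γ : Set (Wd × Wd)} (hμ : sigmaMu ∈ Γ)
    (hsound : ∀ {u v}, Provable Γ u v → Admissible Γ u v) :
    ∀ {c u v : Wd}, Admissible Γ (c ++ u) (c ++ v) → Provable Γ (c ++ u) (c ++ v)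
  | c, [], v, h => by
    have hlen := (List.perm_iff_count.mpr h.1.count_eq).length_eq
    rw [List.length_append, List.length_append, List.length_nil] at hlen
    obtain rfl : v = [] := List.length_eq_zero_iff.mp (by omega)
    exact .refl _
  | c, x :: u₁, v, h => by
    obtain ⟨w', hw'⟩ := h.exists_provable_cons hμ
    have hrest := provable_of_admissible hμ hsound (c := c ++ [x]) (u := u₁) (v := w')
      (by simpa using h.trans (hsound hw'))
    simp only [List.append_assoc, List.singleton_append] at hrest
    exact hrest.trans hw'.symm

theorem provable_iff_admissible {Γ : Set (Wd × Wd)} (hμ : sigmaMu ∈ Γ)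
    (hsound : ∀ {u v}, Provable Γ u v → Admissible Γ u v) {u v : Wd} :
    Provable Γ u v ↔ Admissible Γ u v :=
  ⟨hsound, fun h => provable_of_admissible (c := []) hμ hsound h⟩

/-! ### The identities σμ, σ₁, σ₂ -/

theorem head?_append_eq_of_imp {p s s' : Wd} (h : p = [] → s = s') :
    (p ++ s).head? = (p ++ s').head? := by
  cases p with
  | nil => rw [h rfl]
  | cons => rfl

theorem head?_flatMap_sigmaMu (σ : ℕ → Wd) :
    (sigmaMu.1.flatMap σ).head? = (sigmaMu.2.flatMap σ).head? := by
  simpa [sigmaMu] using head?_append_eq_of_imp (p := σ 0 ++ σ 2)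
    (s := σ 0 ++ σ 1 ++ σ 3 ++ σ 1) (s' := σ 1 ++ σ 0 ++ σ 3 ++ σ 1) (by simp +contextual)

theorem head?_flatMap_sigma2 (σ : ℕ → Wd) :
    (sigma2.1.flatMap σ).head? = (sigma2.2.flatMap σ).head? := by
  simpa [sigma2] using head?_append_eq_of_imp (p := σ 0 ++ σ 2 ++ σ 1 ++ σ 3)
    (s := σ 0 ++ σ 1) (s' := σ 1 ++ σ 0) (by simp +contextual)

theorem AlmostLinearW.append_comm {w A B : Wd} (hw : AlmostLinearW w)
    (hAB : ∀ z ∈ A ++ B, 2 ≤ w.count z) : A ++ B = B ++ A := by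
  cases h : A ++ B with
  | nil => simp_all
  | cons y t =>
    have hy : ∀ z ∈ A ++ B, z = y := fun z hz =>
      hw z y (hAB z hz) (hAB y (h ▸ List.mem_cons_self))
    rw [← h, List.eq_replicate_of_mem hy,
      List.eq_replicate_of_mem (l := B ++ A) fun z hz => hy z (List.mem_append.mpr
        (List.mem_append.mp hz).symm), List.length_append, List.length_append, Nat.add_comm]

theorem almostLinearAgree_swap {p A B s : Wd} (hA : A ⊆ p ++ s) (hB : B ⊆ p ++ s) :
    AlmostLinearAgree (p ++ A ++ B ++ s) (p ++ B ++ A ++ s) := by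
  have hcount : ∀ {w : Wd}, w.Perm (p ++ A ++ B ++ s) → ∀ z ∈ A ++ B, 2 ≤ w.count z := by
    intro w hw z hz
    have h₁ := List.count_pos_iff.mpr hz
    have h₂ := List.count_pos_iff.mpr ((List.mem_append.mp hz).elim (@hA z) (@hB z))
    rw [hw.count_eq]
    simp only [List.count_append] at h₁ h₂ ⊢
    omega
  have hperm : (p ++ B ++ A ++ s).Perm (p ++ A ++ B ++ s) :=
    List.perm_iff_count.mpr fun z => by simp only [List.count_append]; omega
  rintro (hal | hal) <;> rw [List.append_assoc p A, List.append_assoc p B]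
  · rw [hal.append_comm (hcount (.refl _))]
  · rw [hal.append_comm (hcount hperm)]

theorem almostLinearAgree_flatMap_sigmaMu (σ : ℕ → Wd) :
    AlmostLinearAgree (sigmaMu.1.flatMap σ) (sigmaMu.2.flatMap σ) := by
  simpa [sigmaMu] using almostLinearAgree_swap (p := σ 0 ++ σ 2) (A := σ 0) (B := σ 1)
    (s := σ 3 ++ σ 1) (fun z => by simp +contextual) (fun z => by simp +contextual)

theorem almostLinearAgree_flatMap_sigma1 (σ : ℕ → Wd) :
    AlmostLinearAgree (sigma1.1.flatMap σ) (sigma1.2.flatMap σ) := by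
  simpa [sigma1] using almostLinearAgree_swap (p := []) (A := σ 0) (B := σ 1)
    (s := σ 2 ++ σ 0 ++ σ 3 ++ σ 1) (fun z => by simp +contextual) (fun z => by simp +contextual)

section Reversal

variable {u v : Wd}

-- `n ↦ n ^^^ 1` is the renaming `x ↔ y`, `t₁ ↔ t₂`.

theorem Provable.reverse_sigmaMu (h : Provable {sigmaMu} u v) :
    Provable {sigmaMu} u.reverse v.reverse :=
  h.reverse (by rintro e rfl; exact ⟨sigmaMu, rfl, fun n => [n ^^^ 1], by decide, by decide⟩)

theorem Provable.reverse_sigma1_sigmaMu (h : Provable {sigma1, sigmaMu} u v) :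
    Provable {sigma2, sigmaMu} u.reverse v.reverse :=
  h.reverse (by
    rintro e (rfl | rfl)
    · exact ⟨sigma2, .inl rfl, fun n => [n ^^^ 1], by decide, by decide⟩
    · exact ⟨sigmaMu, .inr rfl, fun n => [n ^^^ 1], by decide, by decide⟩)

theorem Provable.reverse_sigma2_sigmaMu (h : Provable {sigma2, sigmaMu} u v) :
    Provable {sigma1, sigmaMu} u.reverse v.reverse :=
  h.reverse (by
    rintro e (rfl | rfl)
    · exact ⟨sigma1, .inl rfl, fun n => [n ^^^ 1], by decide, by decide⟩
    · exact ⟨sigmaMu, .inr rfl, fun n => [n ^^^ 1], by decide, by decide⟩)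

end Reversal

theorem Provable.admissible_sigmaMu {u v : Wd} (h : Provable {sigmaMu} u v) :
    Admissible {sigmaMu} u v := by
  have hBB := h.blockBalanced (by rintro e rfl; exact almostLinearAgree_flatMap_sigmaMu)
  refine ⟨hBB, (lastOrderSame_iff_firstOrderSame_reverse hBB.mem_iff).mpr ?_, .inr ?_⟩
  · exact h.reverse_sigmaMu.firstOrderSame (by rintro e rfl; exact head?_flatMap_sigmaMu)
  · exact h.firstOrderSame (by rintro e rfl; exact head?_flatMap_sigmaMu)

theorem Provable.admissible_sigma1_sigmaMu {u v : Wd} (h : Provable {sigma1, sigmaMu} u v) :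
    Admissible {sigma1, sigmaMu} u v := by
  have hBB := h.blockBalanced (by
    rintro e (rfl | rfl)
    exacts [almostLinearAgree_flatMap_sigma1, almostLinearAgree_flatMap_sigmaMu])
  refine ⟨hBB, (lastOrderSame_iff_firstOrderSame_reverse hBB.mem_iff).mpr ?_, .inl (.inl rfl)⟩
  exact h.reverse_sigma1_sigmaMu.firstOrderSame (by
    rintro e (rfl | rfl)
    exacts [head?_flatMap_sigma2, head?_flatMap_sigmaMu])

theorem consequence_sigmaMu_iff (u v : Wd) :
    Consequence (delta {sigmaMu}) (u, v) ↔
      BlockBalanced (u, v) ∧ FirstOrderSame (u, v) ∧ LastOrderSame (u, v) := by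
  rw [consequence_delta_iff, consequence_iff_provable,
    provable_iff_admissible (Set.mem_singleton _) Provable.admissible_sigmaMu]
  have hσ : sigma1 ∉ ({sigmaMu} : Set (Wd × Wd)) := by decide
  simp only [Admissible, hσ, false_or]
  tauto

theorem consequence_sigma1_sigmaMu_iff (u v : Wd) :
    Consequence (delta {sigma1, sigmaMu}) (u, v) ↔ BlockBalanced (u, v) ∧ LastOrderSame (u, v) := by
  rw [consequence_delta_iff, consequence_iff_provable,
    provable_iff_admissible (.inr rfl) Provable.admissible_sigma1_sigmaMu]
  simp [Admissible]

theorem consequence_sigma2_sigmaMu_iff (u v : Wd) :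
    Consequence (delta {sigma2, sigmaMu}) (u, v) ↔ BlockBalanced (u, v) ∧ FirstOrderSame (u, v) := by
  have hrev : Provable {sigma2, sigmaMu} u v ↔ Provable {sigma1, sigmaMu} u.reverse v.reverse :=
    ⟨Provable.reverse_sigma2_sigmaMu, fun h => by simpa using h.reverse_sigma1_sigmaMu⟩
  rw [consequence_delta_iff, consequence_iff_provable, hrev,
    provable_iff_admissible (.inr rfl) Provable.admissible_sigma1_sigmaMu]
  simp only [Admissible, Set.mem_insert_iff, true_or, and_true, BlockBalanced.reverse_iff]
  refine and_congr_right fun hBB => ?_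
  rw [lastOrderSame_iff_firstOrderSame_reverse (by simpa using hBB.mem_iff), List.reverse_reverse,
    List.reverse_reverse]

theorem stmt16 :
    (∀ e : Wd × Wd, Consequence (delta {sigmaMu}) e ↔
      (BlockBalanced e ∧ FirstOrderSame e ∧ LastOrderSame e)) ∧
    (∀ e : Wd × Wd, Consequence (delta {sigma1, sigmaMu}) e ↔
      (BlockBalanced e ∧ LastOrderSame e)) ∧
    (∀ e : Wd × Wd, Consequence (delta {sigma2, sigmaMu}) e ↔
      (BlockBalanced e ∧ FirstOrderSame e)) :=
  ⟨fun (u, v) => consequence_sigmaMu_iff u v, fun (u, v) => consequence_sigma1_sigmaMu_iff u v,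
    fun (u, v) => consequence_sigma2_sigmaMu_iff u v⟩
end

section
/- Let A, B, C be words and x a variable such that x occurs in A, x occurs in C, and every variable occurring in B also occurs in C. Then the identity A B x C ≈ A x B x C is a consequence of {x t1 x t2 x ≈ x t1 x x t2 x, x t1 y x x t2 y ≈ x t1 x y x x t2 y}^δ, where x, y, t1, t2 are distinct variables. -/
/-! Write `a` for the value of `x`. Because `C` contains `x`, the first identity doubles an `a`
sitting in front of `C`; the second then moves a letter `b` of `B`, which also occurs in `C`,
past that `a`: `a t b a C = a t b a a C = a t a b a a C = a t a b a C`. Pushing the new `a`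
leftwards through `B` one letter at a time turns `A B x C` into `A x B x C`. -/

def IsFactor {M : Type*} [Monoid M] (b c : M) : Prop := ∃ d₁ d₂, c = d₁ * b * d₂

namespace IsFactor

variable {M : Type*} [Monoid M] {b c : M}

lemma mul_left (h : IsFactor b c) (d : M) : IsFactor b (d * c) := by
  obtain ⟨d₁, d₂, rfl⟩ := h
  exact ⟨d * d₁, d₂, by simp only [mul_assoc]⟩

lemma mul_right_self (b c : M) : IsFactor b (b * c) := ⟨1, c, by rw [one_mul]⟩

end IsFactor

section Absorption

variable {M : Type*} [Monoid M] {a c : M}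

lemma mul_self_mul_eq_of_isFactor
    (hdup : ∀ t s : M, a * t * a * s * a = a * t * a * a * s * a)
    (ha : IsFactor a c) (t : M) :
    a * t * a * c = a * t * a * a * c := by
  obtain ⟨d₁, d₂, rfl⟩ := ha
  simp only [← mul_assoc]
  rw [hdup]

lemma mul_mul_self_mul_eq_of_isFactor {b : M}
    (hdup : ∀ t s : M, a * t * a * s * a = a * t * a * a * s * a)
    (hswap : ∀ t b s : M, a * t * b * a * a * s * b = a * t * a * b * a * a * s * b)
    (ha : IsFactor a c) (hb : IsFactor b c) (t : M) :
    a * t * b * a * c = a * t * a * b * a * c := by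
  obtain ⟨d₁, d₂, hc⟩ := hb
  calc a * t * b * a * c = a * (t * b) * a * a * c := by
        rw [← mul_self_mul_eq_of_isFactor hdup ha, mul_assoc a t]
    _ = a * t * b * a * a * d₁ * b * d₂ := by rw [hc]; simp only [mul_assoc]
    _ = a * t * a * b * a * a * d₁ * b * d₂ := by rw [hswap]
    _ = a * (t * a * b) * a * a * c := by rw [hc]; simp only [mul_assoc]
    _ = a * t * a * b * a * c := by
        rw [← mul_self_mul_eq_of_isFactor hdup ha]; simp only [mul_assoc]

lemma mul_prod_mul_eq_of_isFactor
    (hdup : ∀ t s : M, a * t * a * s * a = a * t * a * a * s * a)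
    (hswap : ∀ t b s : M, a * t * b * a * a * s * b = a * t * a * b * a * a * s * b)
    (bs : List M) (ha : IsFactor a c) (hbs : ∀ b ∈ bs, IsFactor b c) (t : M) :
    a * t * bs.prod * a * c = a * t * a * bs.prod * a * c := by
  induction bs using List.reverseRecOn generalizing c t with
  | nil => simpa using mul_self_mul_eq_of_isFactor hdup ha t
  | append_singleton bs b ih =>
    have hb : IsFactor b c := hbs b (by simp)
    have ha' : IsFactor a (b * a * c) := by
      rw [mul_assoc]; exact (IsFactor.mul_right_self a c).mul_left b
    have hbs' : ∀ b' ∈ bs, IsFactor b' (b * a * c) := fun b' hb' => by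
      rw [mul_assoc]; exact ((hbs b' (by simp [hb'])).mul_left a).mul_left b
    have step := mul_mul_self_mul_eq_of_isFactor hdup hswap ha hb
    calc a * t * (bs ++ [b]).prod * a * c = a * (t * bs.prod) * b * a * c := by
          simp only [List.prod_append, List.prod_singleton, mul_assoc]
      _ = a * t * bs.prod * a * (b * a * c) := by rw [step]; simp only [mul_assoc]
      _ = a * t * a * bs.prod * a * (b * a * c) := ih ha' hbs' t
      _ = a * (t * a * bs.prod) * b * a * c := by
          rw [step]; simp only [mul_assoc]
      _ = a * t * a * (bs ++ [b]).prod * a * c := by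
          simp only [List.prod_append, List.prod_singleton, mul_assoc]

end Absorption

lemma restrict_univ (u : Wd) : restrict u Set.univ = u :=
  List.filter_eq_self.mpr fun _ _ => by simp

lemma subset_delta (Γ : Set (Wd × Wd)) : Γ ⊆ delta Γ :=
  fun e he => ⟨e, he, Set.univ, by rw [restrict_univ, restrict_univ]⟩

lemma isFactor_evalWord_of_mem {M : Type*} [Monoid M] (φ : ℕ → M) {y : ℕ} {u : Wd}
    (hy : y ∈ u) : IsFactor (φ y) (evalWord φ u) := by
  obtain ⟨u₁, u₂, rfl⟩ := List.append_of_mem hy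
  exact ⟨evalWord φ u₁, evalWord φ u₂, by simp [evalWord, mul_assoc]⟩

theorem stmt18 (A B C : Wd) (x : ℕ)
    (hA : x ∈ A) (hC : x ∈ C) (hB : ∀ y ∈ B, y ∈ C) :
    Consequence
      (delta {([0,2,0,3,0], [0,2,0,0,3,0]), ([0,2,1,0,0,3,1], [0,2,0,1,0,0,3,1])})
      (A ++ B ++ [x] ++ C, A ++ [x] ++ B ++ [x] ++ C) := by
  intro M _ hM φ
  have hdup : ∀ t s : M, φ x * t * φ x * s * φ x = φ x * t * φ x * φ x * s * φ x :=
    fun t s => by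
      simpa [evalWord, mul_assoc] using hM _ (subset_delta _ (Set.mem_insert _ _))
        (fun n => if n = 0 then φ x else if n = 2 then t else s)
  have hswap : ∀ t b s : M,
      φ x * t * b * φ x * φ x * s * b = φ x * t * φ x * b * φ x * φ x * s * b :=
    fun t b s => by
      simpa [evalWord, mul_assoc] using hM _ (subset_delta _ (Set.mem_insert_of_mem _ rfl))
        (fun n => if n = 0 then φ x else if n = 1 then b else if n = 2 then t else s)
  obtain ⟨A₁, A₂, rfl⟩ := List.append_of_mem hA
  have key := mul_prod_mul_eq_of_isFactor hdup hswap (B.map φ)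
    (isFactor_evalWord_of_mem φ hC)
    (fun _ hb => by
      obtain ⟨y, hy, rfl⟩ := List.mem_map.mp hb
      exact isFactor_evalWord_of_mem φ (hB y hy))
    (evalWord φ A₂)
  simp only [evalWord, List.map_append, List.prod_append, List.map_cons, List.prod_cons,
    List.map_nil, List.prod_nil, mul_one, mul_assoc] at key ⊢
  rw [key]
end
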